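/- Let H(t,x) = a3*(x(15-x))^3 + a2*(x(15-x))^2 + a1*(x(15-x)) + a0, where a0 = 46228440064 - 37262033920t + 10620980224t^2 - 1420209280t^3 + 106891216t^4 - 4876960t^5 + 144760t^6 - 2800t^7 + 25t^8, a1 = 4(-790888960 + 642389312t - 177526160t^2 + 21803240t^3 - 1364540t^4 + 42826t^5 - 630t^6 + 5t^7), a2 = 2(35503616 - 29056640t + 7910592t^2 - 929040t^3 + 52318t^4 - 1260t^5 + 7t^6), a3 = 2(-261120 + 215008t - 58040t^2 + 6636t^3 - 350t^4 + 7t^5). Then for every rational t and every i in {1,...,14}, H(t,i) is a square of a rational number. -/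
import Mathlib

def a0 (t : ℚ) : ℚ := 46228440064 - 37262033920*t + 10620980224*t^2 - 1420209280*t^3 + 106891216*t^4 - 4876960*t^5 + 144760*t^6 - 2800*t^7 + 25*t^8
def a1 (t : ℚ) : ℚ := 4*(-790888960 + 642389312*t - 177526160*t^2 + 21803240*t^3 - 1364540*t^4 + 42826*t^5 - 630*t^6 + 5*t^7)
def a2 (t : ℚ) : ℚ := 2*(35503616 - 29056640*t + 7910592*t^2 - 929040*t^3 + 52318*t^4 - 1260*t^5 + 7*t^6)
def a3 (t : ℚ) : ℚ := 2*(-261120 + 215008*t - 58040*t^2 + 6636*t^3 - 350*t^4 + 7*t^5)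

def H (t x : ℚ) : ℚ :=
  a3 t * (x*(15-x))^3 + a2 t * (x*(15-x))^2 + a1 t * (x*(15-x)) + a0 t

theorem H_square_values (t : ℚ) :
    ∀ i ∈ Finset.Icc (1:ℕ) 14, ∃ y : ℚ, H t (i : ℚ) = y^2 := by
  intro i hi
  simp only [Finset.mem_Icc] at hi
  obtain ⟨h1,h2⟩ := hi
  unfold H a0 a1 a2 a3
  interval_cases i <;> push_cast
  · exact ⟨120096 - 47872*t + 4872*t^2 - 252*t^3 + 5*t^4, by ring⟩
  · exact ⟨52896 - 20608*t + 3672*t^2 - 228*t^3 + 5*t^4, by ring⟩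
  · exact ⟨416 - 11968*t + 2892*t^2 - 208*t^3 + 5*t^4, by ring⟩
  · exact ⟨3936 - 9952*t + 2412*t^2 - 192*t^3 + 5*t^4, by ring⟩
  · exact ⟨16992 - 9280*t + 2136*t^2 - 180*t^3 + 5*t^4, by ring⟩
  · exact ⟨14816 - 8512*t + 1992*t^2 - 172*t^3 + 5*t^4, by ring⟩
  · exact ⟨5856 - 7888*t + 1932*t^2 - 168*t^3 + 5*t^4, by ring⟩
  · exact ⟨5856 - 7888*t + 1932*t^2 - 168*t^3 + 5*t^4, by ring⟩
  · exact ⟨14816 - 8512*t + 1992*t^2 - 172*t^3 + 5*t^4, by ring⟩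
  · exact ⟨16992 - 9280*t + 2136*t^2 - 180*t^3 + 5*t^4, by ring⟩
  · exact ⟨3936 - 9952*t + 2412*t^2 - 192*t^3 + 5*t^4, by ring⟩
  · exact ⟨416 - 11968*t + 2892*t^2 - 208*t^3 + 5*t^4, by ring⟩
  · exact ⟨52896 - 20608*t + 3672*t^2 - 228*t^3 + 5*t^4, by ring⟩
  · exact ⟨120096 - 47872*t + 4872*t^2 - 252*t^3 + 5*t^4, by ring⟩
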